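/- arXiv:2601.21455 — 2 statements merged into one kernel-verified Lean document; each statement's English description precedes it below -/
import Mathlib

section
/- Let G : ℝ → ℝ and c ∈ (0,1). Assume G is strictly concave on the closed interval [0, c], G(0) ≥ 0, and G is differentiable at c with derivative D. Then G(c)/c > D, and consequently there exists p ∈ (c, 1) such that p · G(c/p) < G(c). -/
/-!
Strict concavity puts the tangent slope `D` at `c` strictly below the chord slope
`(G c - G 0) / c ≤ G c / c`. The function `p ↦ p * G (c / p)` has derivative `G c - c * D > 0`
at `p = 1`, where it takes the value `G c`, so it is strictly smaller slightly to the left of `1`.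
-/

open Filter Set Topology

lemma StrictConcaveOn.lt_div_of_hasDerivAt {G : ℝ → ℝ} {c D : ℝ} (hc : 0 < c)
    (hconc : StrictConcaveOn ℝ (Icc 0 c) G) (hG0 : 0 ≤ G 0) (hderiv : HasDerivAt G D c) :
    D < G c / c :=
  calc D < slope G 0 c :=
        hconc.lt_slope_of_hasDerivAt (left_mem_Icc.2 hc.le) (right_mem_Icc.2 hc.le) hc hderiv
    _ = (G c - G 0) / c := by rw [slope_def_field, sub_zero]
    _ ≤ G c / c := by gcongr; linarith

lemma hasDerivAt_mul_comp_div {G : ℝ → ℝ} {c q D : ℝ} (hq : q ≠ 0)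
    (hG : HasDerivAt G D (c / q)) :
    HasDerivAt (fun p => p * G (c / p)) (G (c / q) - c / q * D) q := by
  have hdiv : HasDerivAt (fun p => c / p) (-c / q ^ 2) q := by
    simpa [div_eq_mul_inv, neg_div] using (hasDerivAt_inv hq).const_mul c
  refine ((hasDerivAt_id' q).mul (hG.comp q hdiv)).congr_deriv ?_
  simp only [Function.comp_apply]
  field_simp
  ring

lemma HasDerivAt.eventually_nhdsLT_lt_of_pos {f : ℝ → ℝ} {f' x : ℝ} (hf : HasDerivAt f f' x)
    (hf' : 0 < f') : ∀ᶠ y in 𝓝[<] x, f y < f x := by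
  filter_upwards [(hasDerivAt_iff_tendsto_slope_left_right.1 hf).1.eventually
    (eventually_gt_nhds hf'), self_mem_nhdsWithin] with y hslope (hy : y < x)
  rw [slope_comm] at hslope
  exact (slope_pos_iff_of_le hy.le).1 hslope

/-- Localized concavity condition: if the expected length function `G` is strictly concave
on `[0,c]`, nonnegative at `0`, and differentiable at `c` with derivative `D`, then
`G(c)/c > D`, and consequently some `p ∈ (c,1)` satisfies `p · G(c/p) < G(c)`. -/
theorem pt_local_concave_condition (G : ℝ → ℝ) (c : ℝ) (hc : c ∈ Set.Ioo (0 : ℝ) 1)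
    (hconc : StrictConcaveOn ℝ (Set.Icc 0 c) G)
    (hG0 : 0 ≤ G 0)
    (D : ℝ) (hderiv : HasDerivAt G D c) :
    G c / c > D ∧ ∃ p ∈ Set.Ioo c 1, p * G (c / p) < G c := by
  obtain ⟨hc0, hc1⟩ := hc
  have hslope : D < G c / c := hconc.lt_div_of_hasDerivAt hc0 hG0 hderiv
  refine ⟨hslope, ?_⟩
  have hPT : HasDerivAt (fun p => p * G (c / p)) (G c - c * D) 1 := by
    simpa using hasDerivAt_mul_comp_div (c := c) one_ne_zero (by rwa [div_one])
  have hpos : 0 < G c - c * D := by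
    rw [lt_div_iff₀ hc0] at hslope
    linarith
  obtain ⟨p, hp_lt, hp_mem⟩ :=
    ((hPT.eventually_nhdsLT_lt_of_pos hpos).and (Ioo_mem_nhdsLT hc1)).exists
  exact ⟨p, hp_mem, by simpa using hp_lt⟩
end

section
/- Let Φ be the cumulative distribution function of the standard Gaussian measure on ℝ (mean 0, variance 1). For every α ∈ (0,1), every p ∈ (1-α, 1), and all x, y ∈ ℝ such that Φ(x) = α/2 and Φ(y) = (1 - (1-α)/p)/2, it holds that p · y < x. -/
open ProbabilityTheory

noncomputable def stdGaussianCDF : ℝ → ℝ := fun x => cdf (gaussianReal 0 1) x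

/-! On `[0, ∞)` the Gaussian CDF `Φ` is strictly concave, its derivative being the density, which
decreases there. With `Φ 0 = 1/2` this gives `Φ (p a) > p Φ a + (1 - p)/2` for `a = -y > 0`;
by the choice of `y` the right-hand side is `1 - α/2`, so by symmetry `Φ (p y) < α/2 = Φ x`. -/

open MeasureTheory Set
open scoped NNReal

namespace ProbabilityTheory

lemma gaussianPDFReal_zero_neg (v : ℝ≥0) (x : ℝ) :
    gaussianPDFReal 0 v (-x) = gaussianPDFReal 0 v x := by
  simp [gaussianPDFReal]

lemma continuous_gaussianPDFReal (μ : ℝ) (v : ℝ≥0) : Continuous (gaussianPDFReal μ v) := by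
  rw [gaussianPDFReal_def]
  fun_prop

lemma gaussianPDFReal_strictAntiOn (μ : ℝ) {v : ℝ≥0} (hv : v ≠ 0) :
    StrictAntiOn (gaussianPDFReal μ v) (Ici μ) := by
  intro s hs t ht hst
  simp only [gaussianPDFReal]
  gcongr
  exact sub_nonneg.2 hs

variable {v : ℝ≥0}

lemma cdf_gaussianReal_eq_integral (μ : ℝ) (hv : v ≠ 0) (t : ℝ) :
    cdf (gaussianReal μ v) t = ∫ u in Iic t, gaussianPDFReal μ v u := by
  rw [cdf_eq_real, measureReal_def, gaussianReal_apply_eq_integral μ hv,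
    ENNReal.toReal_ofReal (setIntegral_nonneg measurableSet_Iic
      fun u _ => gaussianPDFReal_nonneg μ v u)]

lemma cdf_gaussianReal_sub_cdf (μ : ℝ) (hv : v ≠ 0) (s t : ℝ) :
    cdf (gaussianReal μ v) t - cdf (gaussianReal μ v) s = ∫ u in s..t, gaussianPDFReal μ v u := by
  rw [cdf_gaussianReal_eq_integral μ hv, cdf_gaussianReal_eq_integral μ hv,
    intervalIntegral.integral_Iic_sub_Iic (integrable_gaussianPDFReal μ v).integrableOn
      (integrable_gaussianPDFReal μ v).integrableOn]

lemma hasDerivAt_cdf_gaussianReal (μ : ℝ) (hv : v ≠ 0) (t : ℝ) :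
    HasDerivAt (cdf (gaussianReal μ v)) (gaussianPDFReal μ v t) t := by
  have hcdf : (fun u => cdf (gaussianReal μ v) 0 + ∫ w in (0 : ℝ)..u, gaussianPDFReal μ v w) =
      cdf (gaussianReal μ v) := by
    funext u
    rw [← cdf_gaussianReal_sub_cdf μ hv, add_sub_cancel]
  have hc := continuous_gaussianPDFReal μ v
  rw [← hcdf]
  exact (intervalIntegral.integral_hasDerivAt_right (hc.intervalIntegrable 0 t)
    hc.aestronglyMeasurable.stronglyMeasurableAtFilter hc.continuousAt).const_add _

lemma strictConcaveOn_cdf_gaussianReal (μ : ℝ) (hv : v ≠ 0) :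
    StrictConcaveOn ℝ (Ici μ) (cdf (gaussianReal μ v)) := by
  have hderiv : deriv (cdf (gaussianReal μ v)) = gaussianPDFReal μ v :=
    funext fun t => (hasDerivAt_cdf_gaussianReal μ hv t).deriv
  refine StrictAntiOn.strictConcaveOn_of_deriv (convex_Ici μ)
    (fun t _ => (hasDerivAt_cdf_gaussianReal μ hv t).continuousAt.continuousWithinAt) ?_
  rw [hderiv, interior_Ici]
  exact (gaussianPDFReal_strictAntiOn μ hv).mono Ioi_subset_Ici_self

lemma cdf_gaussianReal_zero_neg (hv : v ≠ 0) (t : ℝ) :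
    cdf (gaussianReal 0 v) (-t) = 1 - cdf (gaussianReal 0 v) t := by
  have hint := integrable_gaussianPDFReal 0 v
  have hrefl := integral_comp_neg_Iic (-t) (gaussianPDFReal 0 v)
  simp only [gaussianPDFReal_zero_neg, neg_neg] at hrefl
  rw [cdf_gaussianReal_eq_integral 0 hv, cdf_gaussianReal_eq_integral 0 hv, hrefl, ← compl_Iic,
    setIntegral_compl measurableSet_Iic hint, integral_gaussianPDFReal_eq_one 0 hv]

lemma cdf_gaussianReal_zero_zero (hv : v ≠ 0) : cdf (gaussianReal 0 v) 0 = 1 / 2 := by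
  have h := cdf_gaussianReal_zero_neg hv 0
  rw [neg_zero] at h
  linarith

end ProbabilityTheory

/-- Failure case lemma of the Prejudicial Trick for Gaussian nonconformity scores
(lower-tail form): if `Φ x = α/2` and `Φ y = (1 - (1-α)/p)/2`, then `p·y < x`. -/
theorem gaussian_failure_lower (α p : ℝ) (hα : α ∈ Set.Ioo (0 : ℝ) 1)
    (hp : p ∈ Set.Ioo (1 - α) 1) (x y : ℝ)
    (hx : stdGaussianCDF x = α / 2)
    (hy : stdGaussianCDF y = (1 - (1 - α) / p) / 2) :
    p * y < x := by
  obtain ⟨-, hα1⟩ := hα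
  obtain ⟨hpα, hp1⟩ := hp
  have hp0 : 0 < p := by linarith
  set Φ := cdf (gaussianReal 0 1)
  change Φ x = α / 2 at hx
  change Φ y = (1 - (1 - α) / p) / 2 at hy
  have hΦ0 : Φ 0 = 1 / 2 := cdf_gaussianReal_zero_zero one_ne_zero
  have hΦneg (t : ℝ) : Φ (-t) = 1 - Φ t := cdf_gaussianReal_zero_neg one_ne_zero t
  have hy0 : y < 0 := (monotone_cdf _).reflect_lt <| by
    rw [hΦ0, hy]
    have : 0 < (1 - α) / p := by positivity
    linarith
  have hconc : p * Φ (-y) + (1 - p) * Φ 0 < Φ (-(p * y)) := by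
    simpa using (strictConcaveOn_cdf_gaussianReal 0 one_ne_zero).2 (x := -y) (y := 0)
      (neg_nonneg.2 hy0.le) self_mem_Ici (by linarith) hp0 (sub_pos.2 hp1) (add_sub_cancel p 1)
  rw [hΦ0, hΦneg, hy] at hconc
  refine (monotone_cdf (gaussianReal 0 1)).reflect_lt ?_
  rw [hx, ← neg_neg (p * y), hΦneg]
  field_simp at hconc
  linarith
end
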